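/- Let H be a real separable Hilbert space and S : H × H → ℝ a continuous symmetric bilinear form with induced map 𝒮 : H → H*. Suppose u₁,…,uₙ ∈ H satisfy 𝒮uᵢ = φᵢ for i = 1,…,n, where φ₁,…,φₙ are linearly independent continuous linear functionals on H. Let c be the number of non-positive eigenvalues, counted with multiplicity, of the real symmetric n×n matrix (S(uᵢ,uⱼ))ᵢⱼ. Then MI^{φ₁,…,φₙ}(S) = MI(S) − c; in particular MI(S) ≥ c. -/

import Mathlib

/-- The Morse index of the continuous bilinear form `S` restricted to the subspace `G`:
the supremum of dimensions of subspaces of `G` on which `S` is negative definite. -/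
noncomputable def morseIndexOn {H : Type*} [NormedAddCommGroup H] [InnerProductSpace ℝ H]
    (S : H →L[ℝ] H →L[ℝ] ℝ) (G : Submodule ℝ H) : ℕ :=
  sSup {n : ℕ | ∃ W : Submodule ℝ H, W ≤ G ∧ Module.finrank ℝ W = n ∧
    ∀ u ∈ W, u ≠ 0 → S u u < 0}

/-- The (unconstrained) Morse index `MI(S)`. -/
noncomputable def morseIndex {H : Type*} [NormedAddCommGroup H] [InnerProductSpace ℝ H]
    (S : H →L[ℝ] H →L[ℝ] ℝ) : ℕ :=
  morseIndexOn S ⊤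

/-! The vectors `zₖ = ∑ᵢ Pᵢₖ uᵢ`, with `P` an orthogonal matrix diagonalizing `(S(uᵢ,uⱼ))`,
are pairwise `S`-orthogonal with `S(zₖ,zₖ) = λₖ`, and the functionals `S zₖ` span the same space
as the `φᵢ`. So the constraints can be imposed one `S zₖ` at a time, and each one is handled by
the single-constraint case, for `z` in the current subspace `G`:
* if `S(z,z) > 0`, the `S`-orthogonal projection along `z` maps negative definite subspaces of
  `G` injectively into `G ∩ ker (S z)`, so the index does not change;
* if `S(z,z) ≤ 0`, intersecting with `ker (S z)` costs at most one dimension, and conversely a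
  negative definite `W ≤ G ∩ ker (S z)` extends by `z - t e`, where `e` is the component of some
  `d ∈ G` with `S(z,d) ≠ 0` that is `S`-orthogonal to `W`, and `t` is small with the sign of
  `S(z,d)`; so the index drops by exactly one. -/

open Module Submodule

theorem Submodule.finrank_sup_span_singleton_of_notMem {K V : Type*} [Field K] [AddCommGroup V]
    [Module K V] {W : Submodule K V} [FiniteDimensional K W] {y : V} (hy : y ∉ W) :
    finrank K ↥(W ⊔ span K {y}) = finrank K W + 1 := by
  have hy0 : y ≠ 0 := fun h => hy (h ▸ W.zero_mem)
  have h := finrank_sup_add_finrank_inf_eq W (span K {y})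
  rwa [((disjoint_span_singleton' hy0).2 hy).eq_bot, finrank_bot, add_zero,
    finrank_span_singleton hy0] at h

theorem Submodule.finrank_le_finrank_inf_ker_add_one {K V : Type*} [Field K] [AddCommGroup V]
    [Module K V] (W : Submodule K V) [FiniteDimensional K W] (f : V →ₗ[K] K) :
    finrank K W ≤ finrank K ↥(W ⊓ LinearMap.ker f) + 1 := by
  rw [← map_comap_subtype, finrank_map_subtype_eq, ← LinearMap.ker_comp,
    ← (f ∘ₗ W.subtype).finrank_range_add_finrank_ker, add_comm]
  gcongr
  simpa using (LinearMap.range (f ∘ₗ W.subtype)).finrank_le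

theorem LinearIndependent.exists_mem_iInf_ker_apply_ne_zero {K V ι : Type*} [Field K]
    [AddCommGroup V] [Module K V] {ψ : ι → V →ₗ[K] K} (hψ : LinearIndependent K ψ)
    {s : Finset ι} {k : ι} (hk : k ∉ s) :
    ∃ d ∈ ⨅ j ∈ s, LinearMap.ker (ψ j), ψ k d ≠ 0 := by
  by_contra! h
  have hle : ⨅ j : (s : Set ι), LinearMap.ker (ψ j) ≤ LinearMap.ker (ψ k) := fun d hd =>
    h d (by simpa [mem_iInf] using hd)
  have := mem_span_of_iInf_ker_le_ker hle
  rw [← Set.image_eq_range] at this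
  exact hψ.notMem_span_image hk this

theorem Submodule.span_range_sum_smul_of_mul_eq_one {R M ι : Type*} [CommRing R]
    [AddCommGroup M] [Module R M] [Fintype ι] [DecidableEq ι] (v : ι → M)
    {P Q : Matrix ι ι R} (hPQ : P * Q = 1) :
    span R (Set.range fun k => ∑ i, P i k • v i) = span R (Set.range v) := by
  refine le_antisymm (span_le.2 (Set.range_subset_iff.2 fun k =>
    sum_mem fun i _ => smul_mem _ _ (subset_span ⟨i, rfl⟩))) (span_le.2 (Set.range_subset_iff.2
    fun i => ?_))
  have : v i = ∑ k, Q k i • ∑ j, P j k • v j := by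
    simp only [Finset.smul_sum, smul_smul]
    rw [Finset.sum_comm]
    simp [← Finset.sum_smul, mul_comm, ← Matrix.mul_apply, hPQ, Matrix.one_apply]
  rw [SetLike.mem_coe, this]
  exact sum_mem fun k _ => smul_mem _ _ (subset_span ⟨k, rfl⟩)

theorem LinearIndependent.of_span_range_eq {K M ι : Type*} [DivisionRing K] [AddCommGroup M]
    [Module K M] [Fintype ι] {f g : ι → M} (hg : LinearIndependent K g)
    (h : span K (Set.range f) = span K (Set.range g)) : LinearIndependent K f := by
  rwa [linearIndependent_iff_card_eq_finrank_span, Set.finrank, h, ← Set.finrank,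
    ← linearIndependent_iff_card_eq_finrank_span]

theorem iInf_ker_eq_dualCoannihilator_span {R M ι : Type*} [CommRing R] [AddCommGroup M]
    [Module R M] (f : ι → Module.Dual R M) :
    ⨅ i, LinearMap.ker (f i) = (span R (Set.range f)).dualCoannihilator := by
  ext x
  rw [← SetLike.mem_coe (p := (span R _).dualCoannihilator), coe_dualCoannihilator_span]
  simp [mem_iInf]

theorem iInf_ker_eq_of_span_range_eq {R M ι ι' : Type*} [CommRing R] [AddCommGroup M]
    [Module R M] {f : ι → Module.Dual R M} {g : ι' → Module.Dual R M}
    (h : span R (Set.range f) = span R (Set.range g)) :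
    ⨅ i, LinearMap.ker (f i) = ⨅ j, LinearMap.ker (g j) := by
  rw [iInf_ker_eq_dualCoannihilator_span, iInf_ker_eq_dualCoannihilator_span, h]

theorem Matrix.IsHermitian.transpose_eigenvectorUnitary_mul_mul {n : Type*} [Fintype n]
    [DecidableEq n] {A : Matrix n n ℝ} (hA : A.IsHermitian) :
    (hA.eigenvectorUnitary : Matrix n n ℝ).transpose * A * hA.eigenvectorUnitary =
      Matrix.diagonal hA.eigenvalues := by
  have h := hA.conjStarAlgAut_star_eigenvectorUnitary
  rwa [Unitary.conjStarAlgAut_star_apply, Matrix.star_eq_conjTranspose,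
    Matrix.conjTranspose_eq_transpose_of_trivial, RCLike.ofReal_real_eq_id,
    Function.id_comp] at h

theorem LinearMap.apply_sum_smul_sum_smul {R V ι κ : Type*} [CommRing R] [AddCommGroup V]
    [Module R V] [Fintype ι] (B : V →ₗ[R] V →ₗ[R] R) (u : ι → V) (P : Matrix ι κ R)
    (k l : κ) :
    B (∑ i, P i k • u i) (∑ j, P j l • u j) =
      (P.transpose * Matrix.of (fun i j => B (u i) (u j)) * P) k l := by
  simp only [map_sum, map_smul, LinearMap.sum_apply, LinearMap.smul_apply, smul_eq_mul,
    Matrix.mul_apply, Matrix.transpose_apply, Matrix.of_apply, Finset.sum_mul, Finset.mul_sum]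
  exact Finset.sum_congr rfl fun i _ => Finset.sum_congr rfl fun j _ => by ring

namespace LinearMap

variable {V : Type*} [AddCommGroup V] [Module ℝ V] {B : V →ₗ[ℝ] V →ₗ[ℝ] ℝ}
  {W : Submodule ℝ V}

def IsNegDefOn (B : V →ₗ[ℝ] V →ₗ[ℝ] ℝ) (W : Submodule ℝ V) : Prop :=
  ∀ v ∈ W, v ≠ 0 → B v v < 0

def HasFiniteMorseIndex (B : V →ₗ[ℝ] V →ₗ[ℝ] ℝ) : Prop :=
  BddAbove {n | ∃ W : Submodule ℝ V, finrank ℝ W = n ∧ B.IsNegDefOn W}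

lemma IsNegDefOn.mono {W' : Submodule ℝ V} (hW : B.IsNegDefOn W) (h : W' ≤ W) :
    B.IsNegDefOn W' :=
  fun v hv => hW v (h hv)

lemma isNegDefOn_bot : B.IsNegDefOn ⊥ :=
  fun _ hv hv0 => absurd ((mem_bot ℝ).1 hv) hv0

lemma IsNegDefOn.finiteDimensional (hfin : B.HasFiniteMorseIndex) (hW : B.IsNegDefOn W) :
    FiniteDimensional ℝ W := by
  obtain ⟨b, hb⟩ := hfin
  by_contra hinf
  have hrank : ((b + 1 : ℕ) : Cardinal) ≤ Module.rank ℝ W :=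
    Cardinal.natCast_lt_aleph0.le.trans (not_lt.1 (mt rank_lt_aleph0_iff.1 hinf))
  obtain ⟨f, hf⟩ := exists_linearIndependent_of_le_rank hrank
  have hf' : LinearIndependent ℝ (W.subtype ∘ f) := hf.map' W.subtype W.ker_subtype
  have hspan : span ℝ (Set.range (W.subtype ∘ f)) ≤ W :=
    span_le.2 (Set.range_subset_iff.2 fun i => (f i).2)
  have := hb ⟨_, by rw [finrank_span_eq_card hf', Fintype.card_fin], hW.mono hspan⟩
  omega

lemma IsNegDefOn.exists_orthogonal_projection (hW : B.IsNegDefOn W) [FiniteDimensional ℝ W]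
    (x : V) : ∃ p ∈ W, ∀ w ∈ W, B (x - p) w = 0 := by
  have hinj : Function.Injective (BilinForm.restrict B W) := by
    refine LinearMap.ker_eq_bot.1 (eq_bot_iff.2 fun p hp => ?_)
    by_contra hp0
    exact (hW p p.2 (by simpa using hp0)).ne (LinearMap.congr_fun hp p)
  obtain ⟨p, hp⟩ := (LinearMap.injective_iff_surjective_of_finrank_eq_finrank
    Subspace.dual_finrank_eq.symm).1 hinj ((B x).domRestrict W)
  refine ⟨p, p.2, fun w hw => ?_⟩
  have := LinearMap.congr_fun hp ⟨w, hw⟩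
  simp only [BilinForm.restrict_apply, domRestrict_apply] at this
  simp [this]

lemma IsNegDefOn.sup_span_singleton (hB : BilinForm.IsSymm B) (hW : B.IsNegDefOn W) {y : V}
    (hyW : ∀ w ∈ W, B y w = 0) (hy : B y y < 0) : B.IsNegDefOn (W ⊔ span ℝ {y}) := by
  rintro _ hv hv0
  obtain ⟨w, hw, _, hz, rfl⟩ := mem_sup.1 hv
  obtain ⟨a, rfl⟩ := mem_span_singleton.1 hz
  have hexp : B (w + a • y) (w + a • y) = B w w + a ^ 2 * B y y := by
    simp only [map_add, map_smul, LinearMap.add_apply, LinearMap.smul_apply, smul_eq_mul,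
      hB.eq w y, hyW w hw]
    ring
  rw [hexp]
  by_cases hw0 : w = 0
  · have ha : a ≠ 0 := by rintro rfl; simp [hw0] at hv0
    have : 0 < a ^ 2 := by positivity
    simp only [hw0, map_zero, zero_add]
    nlinarith
  · nlinarith [hW w hw hw0, sq_nonneg a]

lemma IsNegDefOn.exists_finrank_add_one (hB : BilinForm.IsSymm B) (hW : B.IsNegDefOn W)
    [FiniteDimensional ℝ W] {z d : V} (hWz : W ≤ LinearMap.ker (B z)) (hz : B z z ≤ 0)
    (hzd : B z d ≠ 0) :
    ∃ W' ≤ W ⊔ span ℝ {z, d}, B.IsNegDefOn W' ∧ finrank ℝ W' = finrank ℝ W + 1 := by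
  obtain ⟨p, hpW, hp⟩ := hW.exists_orthogonal_projection d
  set e := d - p
  set t := B z d / (|B e e| + 1)
  set y := z - t • e
  have hyW : ∀ w ∈ W, B y w = 0 := fun w hw => by
    simp [y, hp w hw, show B z w = 0 from hWz hw]
  have hy : B y y < 0 := by
    have hze : B z e = B z d := by simp [e, show B z p = 0 from hWz hpW]
    have hexp : B y y = B z z - 2 * t * B z d + t ^ 2 * B e e := by
      simp only [y, map_sub, map_smul, LinearMap.sub_apply, LinearMap.smul_apply, smul_eq_mul,
        hB.eq e z, hze]
      ring
    have ht : t * (|B e e| + 1) = B z d := div_mul_cancel₀ _ (by positivity)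
    have ht0 : 0 < t ^ 2 := by
      have : t ≠ 0 := by rintro h; rw [h, zero_mul] at ht; exact hzd ht.symm
      positivity
    have htd : t * B z d = t ^ 2 * (|B e e| + 1) := by rw [← ht]; ring
    have hq : t ^ 2 * B e e ≤ t ^ 2 * |B e e| := by gcongr; exact le_abs_self _
    rw [hexp]
    nlinarith [mul_nonneg ht0.le (abs_nonneg (B e e))]
  have hyz : y ∈ W ⊔ span ℝ {z, d} :=
    sub_mem (mem_sup_right (subset_span (by simp)))
      (smul_mem _ _ (sub_mem (mem_sup_right (subset_span (by simp))) (mem_sup_left hpW)))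
  refine ⟨W ⊔ span ℝ {y}, sup_le le_sup_left ((span_singleton_le_iff_mem _ _).2 hyz),
    hW.sup_span_singleton hB hyW hy, finrank_sup_span_singleton_of_notMem fun h => ?_⟩
  exact hy.ne (hyW y h)

lemma IsNegDefOn.exists_le_ker_finrank_eq (hB : BilinForm.IsSymm B) (hW : B.IsNegDefOn W)
    [FiniteDimensional ℝ W] {z : V} (hz : 0 < B z z) :
    ∃ W' ≤ (W ⊔ span ℝ {z}) ⊓ LinearMap.ker (B z), B.IsNegDefOn W' ∧
      finrank ℝ W' = finrank ℝ W := by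
  set π : V →ₗ[ℝ] V := LinearMap.id - (B z z)⁻¹ • (B z).smulRight z
  have hπ : ∀ v, π v = v - (B z v / B z z) • z := fun v => by
    simp [π, smul_smul, div_eq_inv_mul]
  have hzπ : ∀ v, B z (π v) = 0 := fun v => by
    rw [hπ]; simp [field]
  have hππ : ∀ v, B (π v) (π v) ≤ B v v := fun v => by
    have hπz : B (π v) z = 0 := by rw [hB.eq, hzπ]
    have : B (π v) (π v) = B v v - B z v ^ 2 / B z z := by
      calc B (π v) (π v) = B (π v) v := by nth_rw 2 [hπ v]; simp [hπz]
        _ = _ := by rw [hπ v]; simp; ring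
    rw [this]; have := div_nonneg (sq_nonneg (B z v)) hz.le; linarith
  have hneg : ∀ v ∈ W, v ≠ 0 → B (π v) (π v) < 0 := fun v hv hv0 =>
    (hππ v).trans_lt (hW v hv hv0)
  have hinj : Function.Injective (π ∘ₗ W.subtype) := by
    refine LinearMap.ker_eq_bot.1 (eq_bot_iff.2 fun w hw => ?_)
    by_contra hw0
    have := hneg w w.2 (by simpa using hw0)
    simp_all
  refine ⟨LinearMap.range (π ∘ₗ W.subtype), ?_, ?_, LinearMap.finrank_range_of_inj hinj⟩
  · rintro _ ⟨w, rfl⟩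
    refine ⟨?_, hzπ w⟩
    simp only [LinearMap.comp_apply, subtype_apply, hπ]
    exact sub_mem (mem_sup_left w.2) (mem_sup_right (smul_mem _ _ (mem_span_singleton_self z)))
  · rintro _ ⟨w, rfl⟩ hw0
    exact hneg w w.2 fun h => hw0 (by simp [h])

end LinearMap

section MorseIndex

open LinearMap

variable {H : Type*} [NormedAddCommGroup H] [InnerProductSpace ℝ H]
  {S : H →L[ℝ] H →L[ℝ] ℝ} {G : Submodule ℝ H}

lemma bddAbove_finrank_isNegDefOn_le (hfin : S.toLinearMap₁₂.HasFiniteMorseIndex)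
    (G : Submodule ℝ H) :
    BddAbove {n | ∃ W ≤ G, finrank ℝ W = n ∧ S.toLinearMap₁₂.IsNegDefOn W} := by
  unfold HasFiniteMorseIndex at hfin
  refine hfin.mono ?_
  rintro n ⟨W, -, hW⟩
  exact ⟨W, hW⟩

lemma finrank_le_morseIndexOn (hfin : S.toLinearMap₁₂.HasFiniteMorseIndex) {W : Submodule ℝ H}
    (hWG : W ≤ G) (hW : S.toLinearMap₁₂.IsNegDefOn W) : finrank ℝ W ≤ morseIndexOn S G :=
  le_csSup (bddAbove_finrank_isNegDefOn_le hfin G) ⟨W, hWG, rfl, hW⟩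

lemma exists_finrank_eq_morseIndexOn (hfin : S.toLinearMap₁₂.HasFiniteMorseIndex)
    (G : Submodule ℝ H) :
    ∃ W ≤ G, S.toLinearMap₁₂.IsNegDefOn W ∧ finrank ℝ W = morseIndexOn S G := by
  have hne : 0 ∈ {n | ∃ W ≤ G, finrank ℝ W = n ∧ S.toLinearMap₁₂.IsNegDefOn W} :=
    ⟨⊥, bot_le, finrank_bot ℝ H, isNegDefOn_bot⟩
  obtain ⟨W, hWG, hW, hWneg⟩ := Nat.sSup_mem ⟨0, hne⟩ (bddAbove_finrank_isNegDefOn_le hfin G)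
  exact ⟨W, hWG, hWneg, hW⟩

lemma morseIndexOn_mono (hfin : S.toLinearMap₁₂.HasFiniteMorseIndex) {G' : Submodule ℝ H}
    (h : G' ≤ G) : morseIndexOn S G' ≤ morseIndexOn S G := by
  obtain ⟨W, hWG, hW, hWfr⟩ := exists_finrank_eq_morseIndexOn hfin G'
  exact hWfr ▸ finrank_le_morseIndexOn hfin (hWG.trans h) hW

theorem morseIndexOn_inf_ker_add_one (hS : BilinForm.IsSymm S.toLinearMap₁₂)
    (hfin : S.toLinearMap₁₂.HasFiniteMorseIndex) {z d : H} (hz : z ∈ G) (hd : d ∈ G)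
    (hzd : S z d ≠ 0) (hzz : S z z ≤ 0) :
    morseIndexOn S (G ⊓ LinearMap.ker (S z : H →ₗ[ℝ] ℝ)) + 1 = morseIndexOn S G := by
  apply le_antisymm
  · obtain ⟨W, hWG, hW, hWfr⟩ := exists_finrank_eq_morseIndexOn hfin
      (G ⊓ LinearMap.ker (S z : H →ₗ[ℝ] ℝ))
    have := hW.finiteDimensional hfin
    obtain ⟨W', hW'le, hW', hW'fr⟩ :=
      hW.exists_finrank_add_one hS (hWG.trans inf_le_right) hzz hzd
    have hzdG : span ℝ {z, d} ≤ G := span_le.2 (Set.insert_subset hz (by simpa using hd))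
    rw [← hWfr, ← hW'fr]
    exact finrank_le_morseIndexOn hfin (hW'le.trans (sup_le (hWG.trans inf_le_left) hzdG)) hW'
  · obtain ⟨W, hWG, hW, hWfr⟩ := exists_finrank_eq_morseIndexOn hfin G
    have := hW.finiteDimensional hfin
    calc morseIndexOn S G = finrank ℝ W := hWfr.symm
      _ ≤ finrank ℝ ↥(W ⊓ LinearMap.ker (S z : H →ₗ[ℝ] ℝ)) + 1 :=
        W.finrank_le_finrank_inf_ker_add_one _
      _ ≤ _ := by
        gcongr
        exact finrank_le_morseIndexOn hfin (inf_le_inf_right _ hWG) (hW.mono inf_le_left)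

theorem morseIndexOn_inf_ker_of_pos (hS : BilinForm.IsSymm S.toLinearMap₁₂)
    (hfin : S.toLinearMap₁₂.HasFiniteMorseIndex) {z : H} (hz : z ∈ G) (hzz : 0 < S z z) :
    morseIndexOn S (G ⊓ LinearMap.ker (S z : H →ₗ[ℝ] ℝ)) = morseIndexOn S G := by
  refine le_antisymm (morseIndexOn_mono hfin inf_le_left) ?_
  obtain ⟨W, hWG, hW, hWfr⟩ := exists_finrank_eq_morseIndexOn hfin G
  have := hW.finiteDimensional hfin
  obtain ⟨W', hW'le, hW', hW'fr⟩ := hW.exists_le_ker_finrank_eq hS hzz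
  rw [← hWfr, ← hW'fr]
  refine finrank_le_morseIndexOn hfin (hW'le.trans (inf_le_inf_right _ ?_)) hW'
  exact sup_le hWG ((span_singleton_le_iff_mem _ _).2 hz)

theorem morseIndexOn_iInf_ker_add_card {ι : Type*} [Fintype ι]
    (hS : BilinForm.IsSymm S.toLinearMap₁₂) (hfin : S.toLinearMap₁₂.HasFiniteMorseIndex)
    (z : ι → H) (horth : Pairwise fun k l => S (z k) (z l) = 0)
    (hind : LinearIndependent ℝ fun k => (S (z k) : H →ₗ[ℝ] ℝ)) :
    morseIndexOn S (⨅ k, ker (S (z k) : H →ₗ[ℝ] ℝ)) +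
      Fintype.card {k // S (z k) (z k) ≤ 0} = morseIndex S := by
  classical
  suffices ∀ s : Finset ι, morseIndexOn S (⨅ k ∈ s, ker (S (z k) : H →ₗ[ℝ] ℝ)) +
      (s.filter fun k => S (z k) (z k) ≤ 0).card = morseIndex S by
    simpa [Fintype.card_subtype] using this Finset.univ
  intro s
  induction s using Finset.induction_on with
  | empty => simp [morseIndex]
  | insert k s hk ih =>
    have hzG : z k ∈ ⨅ j ∈ s, ker (S (z j) : H →ₗ[ℝ] ℝ) := by
      simp only [mem_iInf]
      exact fun j hj => horth (ne_of_mem_of_not_mem hj hk)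
    rw [Finset.iInf_insert, inf_comm, Finset.filter_insert, ← ih]
    split_ifs with hzz
    · obtain ⟨d, hdG, hzd⟩ := hind.exists_mem_iInf_ker_apply_ne_zero hk
      have := morseIndexOn_inf_ker_add_one hS hfin hzG hdG hzd hzz
      rw [Finset.card_insert_of_notMem (by simp [hk])]
      omega
    · rw [morseIndexOn_inf_ker_of_pos hS hfin hzG (not_le.1 hzz)]

end MorseIndex

theorem morse_index_with_several_constraints_general
    {H : Type*} [NormedAddCommGroup H] [InnerProductSpace ℝ H]
    (S : H →L[ℝ] H →L[ℝ] ℝ) (hsym : ∀ u v : H, S u v = S v u)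
    -- MI(S) is finite:
    (hfin : BddAbove {n : ℕ | ∃ W : Submodule ℝ H, Module.finrank ℝ W = n ∧
      ∀ u ∈ W, u ≠ 0 → S u u < 0})
    (n : ℕ) (u : Fin n → H) (φ : Fin n → (H →L[ℝ] ℝ))
    (hu : ∀ i, S (u i) = φ i) (hind : LinearIndependent ℝ φ)
    (M : Matrix (Fin n) (Fin n) ℝ) (hM : M = fun i j => S (u i) (u j))
    (hHerm : M.IsHermitian)
    (c : ℕ) (hc : c = Fintype.card {i : Fin n // hHerm.eigenvalues i ≤ 0}) :
    morseIndexOn S (⨅ i, LinearMap.ker (φ i : H →ₗ[ℝ] ℝ)) = morseIndex S - c ∧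
      c ≤ morseIndex S := by
  subst hM hc
  set P : Matrix (Fin n) (Fin n) ℝ := ↑hHerm.eigenvectorUnitary
  set z : Fin n → H := fun k => ∑ i, P i k • u i
  have hdiag : ∀ k l, S (z k) (z l) = Matrix.diagonal hHerm.eigenvalues k l := fun k l =>
    (S.toLinearMap₁₂.apply_sum_smul_sum_smul u P k l).trans
      (congrFun (congrFun hHerm.transpose_eigenvectorUnitary_mul_mul k) l)
  have hspan : span ℝ (Set.range fun k => (S (z k) : H →ₗ[ℝ] ℝ)) =
      span ℝ (Set.range fun i => (φ i : H →ₗ[ℝ] ℝ)) := by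
    simpa [z, hu] using span_range_sum_smul_of_mul_eq_one (fun i => (φ i : H →ₗ[ℝ] ℝ))
      (Unitary.coe_mul_star_self _)
  have hindφ : LinearIndependent ℝ fun i => (φ i : H →ₗ[ℝ] ℝ) :=
    hind.map' (ContinuousLinearMap.coeLM ℝ)
      (LinearMap.ker_eq_bot.2 ContinuousLinearMap.coe_injective)
  have key := morseIndexOn_iInf_ker_add_card (S := S) ⟨hsym⟩ hfin z
    (fun k l hkl => by simp [hdiag, hkl]) (hindφ.of_span_range_eq hspan)
  rw [iInf_ker_eq_of_span_range_eq hspan] at key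
  simp only [hdiag, Matrix.diagonal_apply_eq] at key
  omega

theorem morse_index_with_several_constraints
    {H : Type*} [NormedAddCommGroup H] [InnerProductSpace ℝ H] [CompleteSpace H]
    [TopologicalSpace.SeparableSpace H]
    (S : H →L[ℝ] H →L[ℝ] ℝ) (hsym : ∀ u v : H, S u v = S v u)
    -- MI(S) is finite:
    (hfin : BddAbove {n : ℕ | ∃ W : Submodule ℝ H, Module.finrank ℝ W = n ∧
      ∀ u ∈ W, u ≠ 0 → S u u < 0})
    (n : ℕ) (u : Fin n → H) (φ : Fin n → (H →L[ℝ] ℝ))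
    (hu : ∀ i, S (u i) = φ i) (hind : LinearIndependent ℝ φ)
    (M : Matrix (Fin n) (Fin n) ℝ) (hM : M = fun i j => S (u i) (u j))
    (hHerm : M.IsHermitian)
    (c : ℕ) (hc : c = Fintype.card {i : Fin n // hHerm.eigenvalues i ≤ 0}) :
    morseIndexOn S (⨅ i, LinearMap.ker (φ i : H →ₗ[ℝ] ℝ)) = morseIndex S - c ∧
      c ≤ morseIndex S :=
  morse_index_with_several_constraints_general S hsym hfin n u φ hu hind M hM hHerm c hc
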